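/- Let J, L be natural numbers, ΔU : Fin J → Fin L → ℝ, Δc : Fin J → Fin L → ℝ, and B ∈ ℝ. Define the cumulative utility U(j,l) = Σ_{l' ≤ l} ΔU(j,l') and cumulative cost c(j,l) = Σ_{l' ≤ l} Δc(j,l'). Let X be the set of x : Fin J → Fin L → ℕ with x(j,l) ∈ {0,1}, x(j,·) antitone in the layer index for each j, and Σ_{j} Σ_{l} Δc(j,l) · x(j,l) ≤ B; let Z be the set of z : Fin J → Fin L → ℕ with z(j,l) ∈ {0,1}, Σ_{l} z(j,l) ≤ 1 for every j, and Σ_{j} Σ_{l} c(j,l) · z(j,l) ≤ B. Then the maximum over x ∈ X of Σ_{j} Σ_{l} ΔU(j,l) · x(j,l) equals the maximum over z ∈ Z of Σ_{j} Σ_{l} U(j,l) · z(j,l) (both sets are nonempty and finite, since the all-zero assignment is feasible, so both maxima exist). -/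

import Mathlib

/-!
A precedence-feasible binary layer vector of an object is the indicator of an initial segment
of layers, so it is the tail sum `x l = ∑_{l' ≥ l} z l'` of the indicator `z` of its top layer
(or `z = 0` if no layer is sent); conversely the tail sum of a choice of at most one version is
binary and antitone. Exchanging the order of summation turns `∑ ΔU · x` into `∑ U · z` and
`∑ Δc · x` into `∑ c · z`, so the two feasible sets have the same objective values.
-/

open Finset

section LayerVersion

variable {ι : Type*} [Fintype ι] [LinearOrder ι]

def tailSum (z : ι → ℕ) (l : ι) : ℕ :=
  ∑ l' ∈ univ.filter (fun l' => l ≤ l'), z l'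

theorem sum_mul_tailSum {R : Type*} [CommSemiring R] (a : ι → R) (z : ι → ℕ) :
    ∑ l, a l * (tailSum z l : R) = ∑ l, (∑ l' ∈ univ.filter (fun l' => l' ≤ l), a l') * z l := by
  simp only [tailSum, Nat.cast_sum, mul_sum, sum_mul, sum_filter, Nat.cast_ite, Nat.cast_zero,
    mul_ite, ite_mul, mul_zero, zero_mul]
  exact sum_comm

theorem antitone_tailSum (z : ι → ℕ) : Antitone (tailSum z) := fun _ _ hl =>
  sum_le_sum_of_subset fun _ => by simpa using hl.trans

theorem tailSum_eq_zero_or_one {z : ι → ℕ} (hz : ∑ l, z l ≤ 1) (l : ι) :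
    tailSum z l = 0 ∨ tailSum z l = 1 :=
  Nat.le_one_iff_eq_zero_or_eq_one.mp <| (sum_le_sum_of_subset (filter_subset _ _)).trans hz

theorem tailSum_single (m l : ι) :
    tailSum (Pi.single m 1) l = if l ≤ m then 1 else 0 := by
  simp [tailSum, sum_pi_single']

theorem exists_tailSum_eq {x : ι → ℕ} (hbin : ∀ l, x l = 0 ∨ x l = 1) (hx : Antitone x) :
    ∃ z : ι → ℕ, (∀ l, z l = 0 ∨ z l = 1) ∧ ∑ l, z l ≤ 1 ∧ tailSum z = x := by
  by_cases hsent : (univ.filter (fun l => x l = 1)).Nonempty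
  · set m := (univ.filter (fun l => x l = 1)).max' hsent
    have hm : x m = 1 := by simpa using max'_mem _ hsent
    refine ⟨Pi.single m 1, fun l => ?_, by simp, funext fun l => ?_⟩
    · by_cases h : l = m <;> simp [h]
    rw [tailSum_single]
    split_ifs with hlm
    · have hxl : x m ≤ x l := hx hlm
      rcases hbin l with h | h <;> omega
    · rcases hbin l with h | h
      · exact h.symm
      · exact absurd (le_max' _ l (by simp [h])) hlm
  · refine ⟨0, by simp, by simp, funext fun l => ?_⟩
    simp only [not_nonempty_iff_eq_empty, filter_eq_empty_iff, mem_univ, true_implies] at hsent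
    simp [tailSum, (hbin l).resolve_right (@hsent l)]

end LayerVersion

/-- Lemma 2: within a single time slot, the layered scheduling problem with
segmented objects (precedence-feasible, i.e. antitone-in-layer, binary layer
choices under budget `B`, maximizing total marginal utility `∑ ΔU·x`) has the
same optimal value as the multiple-choice knapsack problem (at most one version
per object, version costs `c j l = ∑_{l' ≤ l} Δc j l'`, maximizing total version
utility `∑ U·z` with `U j l = ∑_{l' ≤ l} ΔU j l'`). -/
theorem stmt_7 (J L : ℕ) (ΔU Δc : Fin J → Fin L → ℝ) (B : ℝ) :
    sSup {v : ℝ | ∃ x : Fin J → Fin L → ℕ,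
        ((∀ j l, x j l = 0 ∨ x j l = 1) ∧
          (∀ j : Fin J, ∀ l₁ l₂ : Fin L, l₁ ≤ l₂ → x j l₂ ≤ x j l₁) ∧
          ∑ j : Fin J, ∑ l : Fin L, Δc j l * (x j l : ℝ) ≤ B) ∧
        v = ∑ j : Fin J, ∑ l : Fin L, ΔU j l * (x j l : ℝ)}
    = sSup {v : ℝ | ∃ z : Fin J → Fin L → ℕ,
        ((∀ j l, z j l = 0 ∨ z j l = 1) ∧
          (∀ j : Fin J, ∑ l : Fin L, z j l ≤ 1) ∧
          ∑ j : Fin J, ∑ l : Fin L,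
            (∑ l' ∈ univ.filter (fun l' : Fin L => l' ≤ l), Δc j l') * (z j l : ℝ) ≤ B) ∧
        v = ∑ j : Fin J, ∑ l : Fin L,
              (∑ l' ∈ univ.filter (fun l' : Fin L => l' ≤ l), ΔU j l') * (z j l : ℝ)} := by
  congr 1
  ext v
  constructor
  · rintro ⟨x, ⟨hbin, hanti, hcost⟩, rfl⟩
    choose z hz_bin hz_sum hxz using fun j => exists_tailSum_eq (hbin j) (hanti j)
    obtain rfl : x = fun j => tailSum (z j) := funext fun j => (hxz j).symm
    exact ⟨z, ⟨hz_bin, hz_sum, by simpa only [sum_mul_tailSum] using hcost⟩,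
      by simp only [sum_mul_tailSum]⟩
  · rintro ⟨z, ⟨-, hz_sum, hcost⟩, rfl⟩
    refine ⟨fun j => tailSum (z j),
      ⟨fun j => tailSum_eq_zero_or_one (hz_sum j), fun j _ _ h => antitone_tailSum (z j) h, ?_⟩, ?_⟩
    · simpa only [sum_mul_tailSum] using hcost
    · simp only [sum_mul_tailSum]
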